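/- Let ν > 0 and a > 0, and let u : ℝ → ℝ be twice differentiable on the interval (a, a+π), not identically zero on (a, a+π), and satisfy u''(r) + (1 − ν/r²)·u(r) = 0 for all r ∈ (a, a+π). Then u has at most one zero in (a, a+π), i.e., there do not exist z₁ ≠ z₂ in (a, a+π) with u(z₁) = u(z₂) = 0. -/

import Mathlib

/-!
Compare `u` with `sin (r - b)`, where `b` is chosen so that `sin (r - b) > 0` between two zeros
`z₁ < z₂` of `u` (possible as `z₂ - z₁ < π`). By Picone's identity `u u' - u² cot (r - b)` has
derivative `(u' - u cot (r - b))² + (ν / r²) u² ≥ 0`; it vanishes at `z₁` and `z₂`, so by Rolle its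
derivative vanishes at some `c` in between, which forces `u c = u' c = 0`. Uniqueness of solutions
of the linear equation then gives `u ≡ 0`.
-/

open Set Real

theorem eqOn_zero_of_secondOrderLinearODE {u u' u'' q : ℝ → ℝ} {α β t₀ K : ℝ}
    (hq : ∀ t ∈ Ioo α β, |q t| ≤ K)
    (hu : ∀ t ∈ Ioo α β, HasDerivAt u (u' t) t)
    (hu' : ∀ t ∈ Ioo α β, HasDerivAt u' (u'' t) t)
    (heq : ∀ t ∈ Ioo α β, u'' t + q t * u t = 0)
    (ht₀ : t₀ ∈ Ioo α β) (h₀ : u t₀ = 0) (h₀' : u' t₀ = 0) :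
    EqOn u 0 (Ioo α β) := by
  have hlip : ∀ t ∈ Ioo α β,
      LipschitzOnWith (max 1 K.toNNReal) (fun p : ℝ × ℝ => (p.2, -q t * p.1)) univ := by
    intro t ht
    refine (LipschitzWith.prod_snd.prodMk ?_).lipschitzOnWith
    refine ((lipschitzWith_smul (-q t)).comp LipschitzWith.prod_fst).weaken ?_
    rw [mul_one, ← NNReal.coe_le_coe, coe_nnnorm, Real.norm_eq_abs, abs_neg]
    exact (hq t ht).trans (Real.le_coe_toNNReal K)
  have hsol : ∀ t ∈ Ioo α β,
      HasDerivAt (fun t => (u t, u' t)) (u' t, -q t * u t) t ∧ (u t, u' t) ∈ univ := by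
    intro t ht
    refine ⟨(hu t ht).prodMk ?_, trivial⟩
    rw [show -q t * u t = u'' t by linarith [heq t ht]]
    exact hu' t ht
  intro t ht
  have := ODE_solution_unique_of_mem_Ioo (g := fun _ => 0) hlip ht₀ hsol
    (fun t _ => ⟨(hasDerivAt_const t 0).congr_deriv (by simp [Prod.ext_iff]), trivial⟩)
    (by simp [h₀, h₀']) ht
  exact congrArg Prod.fst this

theorem hasDerivAt_picone {u u' v v' : ℝ → ℝ} {r u'' v'' : ℝ}
    (hu : HasDerivAt u (u' r) r) (hu' : HasDerivAt u' u'' r)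
    (hv : HasDerivAt v (v' r) r) (hv' : HasDerivAt v' v'' r) (hv₀ : v r ≠ 0) :
    HasDerivAt (fun s => u s * u' s - u s ^ 2 * v' s / v s)
      ((u' r - u r * v' r / v r) ^ 2 + u r * u'' - u r ^ 2 * v'' / v r) r := by
  refine ((hu.fun_mul hu').fun_sub (((hu.fun_pow 2).fun_mul hv').fun_div hv hv₀)).congr_deriv ?_
  field_simp
  ring

theorem exists_double_zero_of_zeros_of_sub_lt_pi {u u' u'' q : ℝ → ℝ} {z₁ z₂ : ℝ}
    (hz : z₁ < z₂) (hπ : z₂ - z₁ < π)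
    (hu : ∀ r ∈ Icc z₁ z₂, HasDerivAt u (u' r) r)
    (hu' : ∀ r ∈ Icc z₁ z₂, HasDerivAt u' (u'' r) r)
    (heq : ∀ r ∈ Ioo z₁ z₂, u'' r + q r * u r = 0)
    (hq : ∀ r ∈ Ioo z₁ z₂, q r < 1)
    (h₁ : u z₁ = 0) (h₂ : u z₂ = 0) :
    ∃ c ∈ Ioo z₁ z₂, u c = 0 ∧ u' c = 0 := by
  obtain ⟨b, hb₂, hb₁⟩ := exists_between (show z₂ - π < z₁ by linarith)
  have hsin : ∀ r ∈ Icc z₁ z₂, sin (r - b) ≠ 0 := fun r hr =>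
    (sin_pos_of_pos_of_lt_pi (by linarith [hr.1]) (by linarith [hr.2])).ne'
  have hP : ∀ r ∈ Icc z₁ z₂,
      HasDerivAt (fun s => u s * u' s - u s ^ 2 * cos (s - b) / sin (s - b))
        ((u' r - u r * cos (r - b) / sin (r - b)) ^ 2 + u r * u'' r
          - u r ^ 2 * -sin (r - b) / sin (r - b)) r := fun r hr =>
    hasDerivAt_picone (hu r hr) (hu' r hr)
      (by simpa using ((hasDerivAt_id r).sub_const b).sin)
      (by simpa using ((hasDerivAt_id r).sub_const b).cos) (hsin r hr)
  obtain ⟨c, hc, hc₀⟩ := exists_hasDerivAt_eq_zero hz (HasDerivAt.continuousOn hP)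
    (by simp [h₁, h₂]) fun r hr => hP r (Ioo_subset_Icc_self hr)
  have hpicone : (u' c - u c * cos (c - b) / sin (c - b)) ^ 2 + (1 - q c) * u c ^ 2 = 0 := by
    rw [← hc₀, show u'' c = -q c * u c by linarith [heq c hc]]
    field_simp [hsin c (Ioo_subset_Icc_self hc)]
    ring
  have hq₀ : 0 < 1 - q c := sub_pos.2 (hq c hc)
  have huc : u c = 0 := by
    by_contra huc
    nlinarith [sq_nonneg (u' c - u c * cos (c - b) / sin (c - b)),
      mul_pos hq₀ (sq_pos_of_ne_zero huc)]
  refine ⟨c, hc, huc, ?_⟩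
  simpa [huc] using hpicone

theorem stmt14 (ν a : ℝ) (hν : 0 < ν) (ha : 0 < a) (u u' u'' : ℝ → ℝ)
    (hu : ∀ r ∈ Set.Ioo a (a + Real.pi), HasDerivAt u (u' r) r)
    (hu' : ∀ r ∈ Set.Ioo a (a + Real.pi), HasDerivAt u' (u'' r) r)
    (heq : ∀ r ∈ Set.Ioo a (a + Real.pi), u'' r + (1 - ν / r^2) * u r = 0)
    (hnz : ∃ r ∈ Set.Ioo a (a + Real.pi), u r ≠ 0) :
    ¬ ∃ z₁ z₂ : ℝ, z₁ ∈ Set.Ioo a (a + Real.pi) ∧ z₂ ∈ Set.Ioo a (a + Real.pi) ∧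
      z₁ ≠ z₂ ∧ u z₁ = 0 ∧ u z₂ = 0 := by
  rintro ⟨z₁, z₂, hz₁, hz₂, hne, h₁, h₂⟩
  wlog hlt : z₁ < z₂ generalizing z₁ z₂
  · exact this z₂ z₁ hz₂ hz₁ hne.symm h₂ h₁ (hne.lt_or_gt.resolve_left hlt)
  have hsub : Icc z₁ z₂ ⊆ Ioo a (a + π) := Icc_subset_Ioo hz₁.1 hz₂.2
  have hν_div_pos : ∀ r ∈ Ioo a (a + π), 0 < ν / r ^ 2 := fun r hr =>
    div_pos hν (pow_pos (ha.trans hr.1) 2)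
  have hbound : ∀ r ∈ Ioo a (a + π), |1 - ν / r ^ 2| ≤ 1 + ν / a ^ 2 := by
    intro r hr
    have : ν / r ^ 2 ≤ ν / a ^ 2 :=
      div_le_div_of_nonneg_left hν.le (pow_pos ha 2) (pow_le_pow_left₀ ha.le hr.1.le 2)
    rw [abs_le]
    constructor <;> linarith [hν_div_pos r hr]
  obtain ⟨c, hc, huc, hu'c⟩ := exists_double_zero_of_zeros_of_sub_lt_pi hlt
    (by linarith [hz₁.1, hz₂.2]) (fun r hr => hu r (hsub hr)) (fun r hr => hu' r (hsub hr))
    (fun r hr => heq r (hsub (Ioo_subset_Icc_self hr)))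
    (fun r hr => sub_lt_self 1 (hν_div_pos r (hsub (Ioo_subset_Icc_self hr)))) h₁ h₂
  obtain ⟨r₀, hr₀, hur₀⟩ := hnz
  exact hur₀ (eqOn_zero_of_secondOrderLinearODE hbound hu hu' heq
    (hsub (Ioo_subset_Icc_self hc)) huc hu'c hr₀)
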